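/- arXiv:0905.0599 — 2 statements merged into one kernel-verified Lean document; each statement's English description precedes it below -/
import Mathlib

section
/- Let 1 ≤ d₁ ≤ d₂ ≤ … ≤ dₙ be a sequence of integers. If there exists an index i ∈ {1,…,n} such that dᵢ = Σ_{j=1}^{i−1} kⱼ·dⱼ for some natural numbers k₁,…,k_{i−1}, then there exists a tame automorphism F of ℂⁿ with multidegree mdeg F = (d₁,…,dₙ). -/
open MvPolynomial

/-- The multidegree of a polynomial automorphism of `ℂⁿ`: the sequence of total degrees of the
images of the variables. -/
noncomputable def polyMdeg {n : ℕ} (F : MvPolynomial (Fin n) ℂ ≃ₐ[ℂ] MvPolynomial (Fin n) ℂ) :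
    Fin n → ℕ := fun i => (F (X i)).totalDegree

/-- An automorphism is affine (linear) if it maps each variable to a polynomial of degree ≤ 1. -/
def IsAffineAut {n : ℕ} (F : MvPolynomial (Fin n) ℂ ≃ₐ[ℂ] MvPolynomial (Fin n) ℂ) : Prop :=
  ∀ i, (F (X i)).totalDegree ≤ 1

/-- An automorphism is elementary (triangular) if it sends one variable `xᵢ` to `xᵢ + p`, where
`p` is a polynomial in the other variables, and fixes all other variables. -/
def IsElementaryAut {n : ℕ} (F : MvPolynomial (Fin n) ℂ ≃ₐ[ℂ] MvPolynomial (Fin n) ℂ) : Prop :=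
  ∃ (i : Fin n) (p : MvPolynomial (Fin n) ℂ), degreeOf i p = 0 ∧
    F (X i) = X i + p ∧ ∀ j, j ≠ i → F (X j) = X j

/-- A tame automorphism is a composition of affine and elementary automorphisms, i.e. an element
of the subgroup generated by these. -/
def IsTameAut {n : ℕ} (F : MvPolynomial (Fin n) ℂ ≃ₐ[ℂ] MvPolynomial (Fin n) ℂ) : Prop :=
  F ∈ Subgroup.closure {G : MvPolynomial (Fin n) ℂ ≃ₐ[ℂ] MvPolynomial (Fin n) ℂ |
    IsAffineAut G ∨ IsElementaryAut G}

/-! If some `d z = 1`, the shear `xⱼ ↦ xⱼ + x_z ^ dⱼ` (`j ≠ z`) already has multidegree `d`.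
Otherwise every `dⱼ ≥ 2`. Substitute `xᵢ ↦ xᵢ + ∏_{j<i} xⱼ ^ kⱼ` and then shear along `xᵢ`,
`xⱼ ↦ xⱼ + xᵢ ^ dⱼ` (`j ≠ i`): the image of `xᵢ` is `xᵢ + ∏_{j<i} (xⱼ + xᵢ ^ dⱼ) ^ kⱼ`, of degree
`∑ kⱼ dⱼ = dᵢ` because total degree is additive over a domain and this sum is at least `2`.
A shear is tame, being a product of elementary automorphisms that fix the shearing variable. -/

namespace MvPolynomial

variable {σ R : Type*}

section CommSemiring

variable [CommSemiring R]

theorem algHom_apply_eq_self_of_forall_mem_vars (φ : MvPolynomial σ R →ₐ[R] MvPolynomial σ R)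
    {p : MvPolynomial σ R} (h : ∀ m ∈ p.vars, φ (X m) = X m) : φ p = p :=
  hom_congr_vars (f₁ := φ.toRingHom) (f₂ := RingHom.id _) (by ext; simp)
    (fun m hm _ => h m hm) rfl

theorem aeval_update_eq_self_of_notMem_vars [DecidableEq σ] {i : σ} {p : MvPolynomial σ R}
    (hp : i ∉ p.vars) (q : MvPolynomial σ R) : aeval (Function.update X i q) p = p :=
  algHom_apply_eq_self_of_forall_mem_vars _ fun m hm => by
    rw [aeval_X, Function.update_of_ne (ne_of_mem_of_not_mem hm hp)]

theorem totalDegree_X_add_X_pow [Nontrivial R] {j b : σ} (hjb : j ≠ b) {q : ℕ} (hq : 1 ≤ q) :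
    (X j + X b ^ q : MvPolynomial σ R).totalDegree = q := by
  classical
  refine le_antisymm ?_ ?_
  · refine (totalDegree_add _ _).trans (max_le ?_ (totalDegree_X_pow b q).le)
    rwa [totalDegree_X]
  · have hmem : Finsupp.single b q ∈ (X j + X b ^ q : MvPolynomial σ R).support := by
      rw [mem_support_iff, coeff_add, coeff_X, coeff_X_pow, if_pos rfl,
        if_neg (by simp [Finsupp.single_eq_single_iff, hjb]), zero_add]
      exact one_ne_zero
    simpa using le_totalDegree hmem

end CommSemiring

section CommRing

variable [CommRing R] [DecidableEq σ]

noncomputable def elementaryAut (i : σ) (p : MvPolynomial σ R) (hp : i ∉ p.vars) :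
    MvPolynomial σ R ≃ₐ[R] MvPolynomial σ R :=
  AlgEquiv.ofAlgHom (aeval (Function.update X i (X i + p)))
    (aeval (Function.update X i (X i - p)))
    (algHom_ext fun j => by
      rcases eq_or_ne j i with rfl | hj
      · simp only [AlgHom.comp_apply, aeval_X, Function.update_self, map_sub,
          aeval_update_eq_self_of_notMem_vars hp, add_sub_cancel_right, AlgHom.id_apply]
      · simp [hj])
    (algHom_ext fun j => by
      rcases eq_or_ne j i with rfl | hj
      · simp only [AlgHom.comp_apply, aeval_X, Function.update_self, map_add,
          aeval_update_eq_self_of_notMem_vars hp, sub_add_cancel, AlgHom.id_apply]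
      · simp [hj])

theorem elementaryAut_apply_X (i : σ) (p : MvPolynomial σ R) (hp : i ∉ p.vars) (j : σ) :
    elementaryAut i p hp (X j) = if j = i then X i + p else X j := by
  rcases eq_or_ne j i with rfl | hj
  · simp [elementaryAut]
  · simp [elementaryAut, hj]

end CommRing

section IsDomain

variable [CommRing R] [IsDomain R]

theorem totalDegree_pow_of_isDomain (p : MvPolynomial σ R) (k : ℕ) :
    (p ^ k).totalDegree = k * p.totalDegree := by
  rcases eq_or_ne p 0 with rfl | hp
  · cases k <;> simp
  induction k with
  | zero => simp
  | succ k ih => rw [pow_succ, totalDegree_mul_of_isDomain (pow_ne_zero k hp) hp, ih]; ring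

theorem totalDegree_prod_of_isDomain {ι : Type*} (s : Finset ι) (P : ι → MvPolynomial σ R)
    (hP : ∀ j ∈ s, P j ≠ 0) :
    (∏ j ∈ s, P j).totalDegree = ∑ j ∈ s, (P j).totalDegree := by
  classical
  induction s using Finset.induction_on with
  | empty => simp
  | insert a s ha ih =>
    have hP' : ∀ j ∈ s, P j ≠ 0 := fun j hj => hP j (Finset.mem_insert_of_mem hj)
    rw [Finset.prod_insert ha, Finset.sum_insert ha,
      totalDegree_mul_of_isDomain (hP a (Finset.mem_insert_self a s))
        (Finset.prod_ne_zero_iff.mpr hP'), ih hP']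

theorem totalDegree_X_add_prod_X_add_X_pow {i : σ} {s : Finset σ} (hi : i ∉ s)
    (d k : σ → ℕ) (hd : ∀ j ∈ s, 1 ≤ d j) (hsum : 2 ≤ ∑ j ∈ s, k j * d j) :
    (X i + ∏ j ∈ s, (X j + X i ^ d j) ^ k j : MvPolynomial σ R).totalDegree
      = ∑ j ∈ s, k j * d j := by
  have hdeg (j : σ) (hj : j ∈ s) : (X j + X i ^ d j : MvPolynomial σ R).totalDegree = d j :=
    totalDegree_X_add_X_pow (ne_of_mem_of_not_mem hj hi) (hd j hj)
  have hne (j : σ) (hj : j ∈ s) : (X j + X i ^ d j : MvPolynomial σ R) ≠ 0 := fun h0 => by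
    have h := hdeg j hj
    rw [h0, totalDegree_zero] at h
    have := hd j hj
    omega
  have hprod : (∏ j ∈ s, (X j + X i ^ d j) ^ k j : MvPolynomial σ R).totalDegree
      = ∑ j ∈ s, k j * d j := by
    rw [totalDegree_prod_of_isDomain _ _ fun j hj => pow_ne_zero _ (hne j hj)]
    exact Finset.sum_congr rfl fun j hj => by rw [totalDegree_pow_of_isDomain, hdeg j hj]
  rw [totalDegree_add_eq_right_of_totalDegree_lt (by rw [totalDegree_X, hprod]; omega), hprod]

end IsDomain

theorem notMem_vars_prod_X_pow [CommSemiring R] [Nontrivial R] [DecidableEq σ] {i : σ}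
    {s : Finset σ} (hi : i ∉ s) (k : σ → ℕ) :
    i ∉ (∏ j ∈ s, X j ^ k j : MvPolynomial σ R).vars := by
  intro h
  obtain ⟨j, hj, hij⟩ := Finset.mem_biUnion.mp (vars_prod _ h)
  have := vars_pow _ _ hij
  rw [vars_X, Finset.mem_singleton] at this
  exact hi (this ▸ hj)

end MvPolynomial

section TameAut

variable {n : ℕ}

theorem isTameAut_elementaryAut (i : Fin n) (p : MvPolynomial (Fin n) ℂ) (hp : i ∉ p.vars) :
    IsTameAut (elementaryAut i p hp) :=
  Subgroup.subset_closure <| Or.inr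
    ⟨i, p, by rwa [mem_vars_iff_degreeOf_ne_zero, not_not] at hp,
      by simp [elementaryAut_apply_X], fun j hj => by simp [elementaryAut_apply_X, hj]⟩

theorem exists_isTameAut_apply_X_eq (S : Finset (Fin n)) (c : Fin n → MvPolynomial (Fin n) ℂ)
    (hc : ∀ j ∈ S, ∀ m ∈ (c j).vars, m ∉ S) :
    ∃ F, IsTameAut F ∧ ∀ j, F (X j) = if j ∈ S then X j + c j else X j := by
  induction S using Finset.induction_on with
  | empty => exact ⟨1, one_mem _, fun j => by simp⟩
  | insert a S ha ih =>
    obtain ⟨F, hF, hFX⟩ := ih fun j hj m hm hmS =>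
      hc j (Finset.mem_insert_of_mem hj) m hm (Finset.mem_insert_of_mem hmS)
    have hca : a ∉ (c a).vars := fun h =>
      hc a (Finset.mem_insert_self a S) a h (Finset.mem_insert_self a S)
    refine ⟨F * elementaryAut a (c a) hca, mul_mem hF (isTameAut_elementaryAut a _ hca),
      fun j => ?_⟩
    rw [AlgEquiv.mul_apply, elementaryAut_apply_X]
    rcases eq_or_ne j a with rfl | hja
    · have hFc : F (c j) = c j :=
        algHom_apply_eq_self_of_forall_mem_vars F.toAlgHom fun m hm => by
          have hmS : m ∉ S := fun h =>
            hc j (Finset.mem_insert_self j S) m hm (Finset.mem_insert_of_mem h)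
          simp [hFX, hmS]
      simp [hFX, ha, hFc]
    · simp [hFX, hja]

theorem exists_isTameAut_shear (b : Fin n) (q : Fin n → ℕ) :
    ∃ F, IsTameAut F ∧ F (X b) = X b ∧ ∀ j ≠ b, F (X j) = X j + X b ^ q j := by
  obtain ⟨F, hF, hFX⟩ := exists_isTameAut_apply_X_eq (Finset.univ.erase b) (fun j => X b ^ q j)
    fun j _ m hm => by
      have := vars_pow _ _ hm
      rw [vars_X, Finset.mem_singleton] at this
      simp [this]
  exact ⟨F, hF, by simp [hFX], fun j hj => by simp [hFX, hj]⟩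

theorem exists_isTameAut_polyMdeg_of_eq_one (d : Fin n → ℕ) (hpos : ∀ i, 1 ≤ d i) (z : Fin n)
    (hz : d z = 1) : ∃ F, IsTameAut F ∧ polyMdeg F = d := by
  obtain ⟨F, hF, hFz, hFX⟩ := exists_isTameAut_shear z d
  refine ⟨F, hF, ?_⟩
  funext j
  rcases eq_or_ne j z with rfl | hj
  · simp [polyMdeg, hFz, hz]
  · simpa only [polyMdeg, hFX j hj] using totalDegree_X_add_X_pow hj (hpos j)

theorem exists_isTameAut_polyMdeg_of_two_le (d : Fin n → ℕ) (htwo : ∀ i, 2 ≤ d i) (i : Fin n)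
    (k : Fin n → ℕ) (hi : d i = ∑ j ∈ Finset.Iio i, k j * d j) :
    ∃ F, IsTameAut F ∧ polyMdeg F = d := by
  obtain ⟨G, hG, hGi, hGX⟩ := exists_isTameAut_shear i d
  have hvars := notMem_vars_prod_X_pow (R := ℂ) (Finset.notMem_Iio_self (b := i)) k
  refine ⟨G * elementaryAut i _ hvars, mul_mem hG (isTameAut_elementaryAut i _ hvars), ?_⟩
  funext j
  simp only [polyMdeg, AlgEquiv.mul_apply, elementaryAut_apply_X]
  rcases eq_or_ne j i with rfl | hj
  · have hGprod : G (∏ m ∈ Finset.Iio j, X m ^ k m)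
        = ∏ m ∈ Finset.Iio j, (X m + X j ^ d m) ^ k m := by
      rw [map_prod]
      exact Finset.prod_congr rfl fun m hm => by rw [map_pow, hGX m (Finset.mem_Iio.mp hm).ne]
    rw [if_pos rfl, map_add, hGi, hGprod, hi, totalDegree_X_add_prod_X_add_X_pow
      Finset.notMem_Iio_self d k (fun m _ => (htwo m).trans' one_le_two) (hi ▸ htwo j)]
  · rw [if_neg hj, hGX j hj, totalDegree_X_add_X_pow hj ((htwo j).trans' one_le_two)]

end TameAut

theorem exists_tame_of_sum_prev_general (n : ℕ) (d : Fin n → ℕ) (hpos : ∀ i, 1 ≤ d i)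
    (i : Fin n) (k : Fin n → ℕ)
    (hi : d i = ∑ j ∈ Finset.Iio i, k j * d j) :
    ∃ F : MvPolynomial (Fin n) ℂ ≃ₐ[ℂ] MvPolynomial (Fin n) ℂ,
      IsTameAut F ∧ polyMdeg F = d := by
  by_cases hone : ∃ z, d z = 1
  · obtain ⟨z, hz⟩ := hone
    exact exists_isTameAut_polyMdeg_of_eq_one d hpos z hz
  · simp only [not_exists] at hone
    have htwo (j : Fin n) : 2 ≤ d j := by
      have := hpos j
      have := hone j
      omega
    exact exists_isTameAut_polyMdeg_of_two_le d htwo i k hi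

/-- If `1 ≤ d₁ ≤ … ≤ dₙ` and some `dᵢ` is a natural combination `∑_{j<i} kⱼ dⱼ` of the previous
terms, then `(d₁, …, dₙ)` is the multidegree of some tame automorphism of `ℂⁿ`. -/
theorem exists_tame_of_sum_prev (n : ℕ) (d : Fin n → ℕ) (hpos : ∀ i, 1 ≤ d i)
    (hmono : Monotone d) (i : Fin n) (k : Fin n → ℕ)
    (hi : d i = ∑ j ∈ Finset.Iio i, k j * d j) :
    ∃ F : MvPolynomial (Fin n) ℂ ≃ₐ[ℂ] MvPolynomial (Fin n) ℂ,
      IsTameAut F ∧ polyMdeg F = d :=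
  exists_tame_of_sum_prev_general n d hpos i k hi
end

section
/- Let f, g ∈ ℂ[x₁,…,xₙ] be polynomials whose highest homogeneous parts f̄ and ḡ are algebraically independent over ℂ, and let G(x,y) = Σ_{i,j} a_{i,j} x^i y^j ∈ ℂ[x,y]. Then deg G(f,g) = max over pairs (i,j) with a_{i,j} ≠ 0 of (i·deg f + j·deg g), where deg denotes total degree. -/
/-!
Give the variables of `G` the weights `w = (deg f, deg g)` and let `D` be the weighted degree of
`G`. Since `deg f ≤ w 0` and `deg g ≤ w 1`, every monomial of `G` of weight `d` becomes a
polynomial of degree `≤ d` under `x ↦ f, y ↦ g`, and its degree-`d` part is the same monomial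
evaluated at `(f̄, ḡ)`. Hence `deg G(f, g) ≤ D`, and the degree-`D` component of `G(f, g)` is
`G_D(f̄, ḡ)`, where `G_D ≠ 0` is the top weighted-homogeneous part of `G`. Algebraic
independence of `f̄, ḡ` makes `G_D(f̄, ḡ) ≠ 0`, so `deg G(f, g) = D`.
-/

open MvPolynomial

/-- The highest homogeneous part of a multivariate polynomial: the sum of all monomials of
maximal total degree. -/
noncomputable def topHomPart {n : ℕ} (f : MvPolynomial (Fin n) ℂ) : MvPolynomial (Fin n) ℂ :=
  homogeneousComponent f.totalDegree f

namespace MvPolynomial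

open Finsupp (weight weight_apply)

section Homogeneous

variable {R σ : Type*} [CommSemiring R]

theorem homogeneousComponent_mul_of_totalDegree_le {p q : MvPolynomial σ R} {a b : ℕ}
    (hp : p.totalDegree ≤ a) (hq : q.totalDegree ≤ b) :
    homogeneousComponent (a + b) (p * q) =
      homogeneousComponent a p * homogeneousComponent b q := by
  classical
  ext d
  rw [coeff_homogeneousComponent, coeff_mul, coeff_mul, Finset.ite_sum_zero]
  refine Finset.sum_congr rfl fun x hx => ?_
  rw [Finset.HasAntidiagonal.mem_antidiagonal] at hx
  by_cases hpx : coeff x.1 p = 0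
  · simp [hpx, coeff_homogeneousComponent]
  by_cases hqx : coeff x.2 q = 0
  · simp [hqx, coeff_homogeneousComponent]
  -- a nonzero term has `deg x.1 ≤ a`, `deg x.2 ≤ b`, so `deg d = a + b` forces both equalities
  have h1 : x.1.degree ≤ a := (le_totalDegree (mem_support_iff.mpr hpx)).trans hp
  have h2 : x.2.degree ≤ b := (le_totalDegree (mem_support_iff.mpr hqx)).trans hq
  have hd : d.degree = x.1.degree + x.2.degree := by rw [← hx, map_add]
  rw [coeff_homogeneousComponent, coeff_homogeneousComponent]
  split_ifs <;> first | rfl | omega | simp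

theorem homogeneousComponent_pow_of_totalDegree_le {p : MvPolynomial σ R} {a : ℕ}
    (hp : p.totalDegree ≤ a) (k : ℕ) :
    homogeneousComponent (k * a) (p ^ k) = homogeneousComponent a p ^ k := by
  induction k with
  | zero => simp [homogeneousComponent_zero]
  | succ k ih =>
    have hpk : (p ^ k).totalDegree ≤ k * a :=
      (totalDegree_pow p k).trans (Nat.mul_le_mul_left k hp)
    rw [add_one_mul, pow_succ, homogeneousComponent_mul_of_totalDegree_le hpk hp, ih, pow_succ]

theorem homogeneousComponent_prod_of_totalDegree_le {ι : Type*} (s : Finset ι)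
    (p : ι → MvPolynomial σ R) (d : ι → ℕ) (h : ∀ i ∈ s, (p i).totalDegree ≤ d i) :
    homogeneousComponent (∑ i ∈ s, d i) (∏ i ∈ s, p i) =
      ∏ i ∈ s, homogeneousComponent (d i) (p i) := by
  classical
  induction s using Finset.induction_on with
  | empty => simp [homogeneousComponent_zero]
  | insert j s hj ih =>
    rw [Finset.forall_mem_insert] at h
    have hs : (∏ i ∈ s, p i).totalDegree ≤ ∑ i ∈ s, d i :=
      (totalDegree_finsetProd s p).trans (Finset.sum_le_sum h.2)
    rw [Finset.sum_insert hj, Finset.prod_insert hj, Finset.prod_insert hj,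
      homogeneousComponent_mul_of_totalDegree_le h.1 hs, ih h.2]

end Homogeneous

theorem weightedHomogeneousComponent_weightedTotalDegree_ne_zero {R σ M : Type*}
    [CommSemiring R] [AddCommMonoid M] [LinearOrder M] [OrderBot M] {w : σ → M}
    {G : MvPolynomial σ R} (hG : G ≠ 0) :
    weightedHomogeneousComponent w (weightedTotalDegree w G) G ≠ 0 := by
  classical
  obtain ⟨m, hm, hmax⟩ : ∃ m ∈ G.support, weightedTotalDegree w G = weight w m :=
    G.support.exists_mem_eq_sup (support_nonempty.mpr hG) (weight w)
  refine ne_of_apply_ne (coeff m) ?_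
  rw [coeff_weightedHomogeneousComponent, if_pos hmax.symm, coeff_zero]
  exact mem_support_iff.mp hm

section Substitution

variable {R σ ι : Type*} [CommSemiring R] {φ : ι → MvPolynomial σ R} {w : ι → ℕ}

theorem aeval_monomial_eq_C_mul_prod (m : ι →₀ ℕ) (r : R) :
    aeval φ (monomial m r) = C r * ∏ i ∈ m.support, φ i ^ m i := by
  rw [aeval_monomial, algebraMap_eq]
  rfl

theorem totalDegree_aeval_monomial_le (hφ : ∀ i, (φ i).totalDegree ≤ w i) (m : ι →₀ ℕ)
    (r : R) : (aeval φ (monomial m r)).totalDegree ≤ weight w m := by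
  rw [aeval_monomial_eq_C_mul_prod, weight_apply]
  calc _ ≤ (C r : MvPolynomial σ R).totalDegree +
          (∏ i ∈ m.support, φ i ^ m i).totalDegree := totalDegree_mul _ _
    _ ≤ 0 + ∑ i ∈ m.support, m i * w i := by
        gcongr
        · exact (totalDegree_C r).le
        · exact (totalDegree_finsetProd _ _).trans <| Finset.sum_le_sum fun i _ =>
            (totalDegree_pow _ _).trans (Nat.mul_le_mul_left _ (hφ i))
    _ = m.sum fun i c => c • w i := by simp [Finsupp.sum]

theorem totalDegree_aeval_le_weightedTotalDegree (hφ : ∀ i, (φ i).totalDegree ≤ w i)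
    (G : MvPolynomial ι R) : (aeval φ G).totalDegree ≤ weightedTotalDegree w G := by
  conv_lhs => rw [G.as_sum, map_sum]
  exact totalDegree_finsetSum_le fun m hm =>
    (totalDegree_aeval_monomial_le hφ m _).trans (le_weightedTotalDegree w hm)

theorem homogeneousComponent_aeval_monomial (hφ : ∀ i, (φ i).totalDegree ≤ w i)
    {m : ι →₀ ℕ} (r : R) {D : ℕ} (hD : weight w m ≤ D) :
    homogeneousComponent D (aeval φ (monomial m r)) =
      aeval (fun i => homogeneousComponent (w i) (φ i))
        (weightedHomogeneousComponent w D (monomial m r)) := by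
  classical
  rw [weightedHomogeneousComponent_of_mem (isWeightedHomogeneous_monomial w m r rfl)]
  split_ifs with h
  · subst h
    rw [aeval_monomial_eq_C_mul_prod, aeval_monomial_eq_C_mul_prod, homogeneousComponent_C_mul,
      weight_apply, Finsupp.sum]
    simp_rw [smul_eq_mul, ← homogeneousComponent_pow_of_totalDegree_le (hφ _)]
    rw [homogeneousComponent_prod_of_totalDegree_le]
    exact fun i _ => (totalDegree_pow _ _).trans (Nat.mul_le_mul_left _ (hφ i))
  · rw [map_zero]
    exact homogeneousComponent_eq_zero _ _
      ((totalDegree_aeval_monomial_le hφ m r).trans_lt (lt_of_le_of_ne hD (Ne.symm h)))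

theorem homogeneousComponent_aeval (hφ : ∀ i, (φ i).totalDegree ≤ w i) {G : MvPolynomial ι R}
    {D : ℕ} (hD : weightedTotalDegree w G ≤ D) :
    homogeneousComponent D (aeval φ G) =
      aeval (fun i => homogeneousComponent (w i) (φ i)) (weightedHomogeneousComponent w D G) := by
  conv_lhs => rw [G.as_sum]
  conv_rhs => rw [G.as_sum]
  simp only [map_sum]
  exact Finset.sum_congr rfl fun m hm =>
    homogeneousComponent_aeval_monomial hφ _ ((le_weightedTotalDegree w hm).trans hD)

end Substitution

end MvPolynomial

/-- If the highest homogeneous parts of `f, g ∈ ℂ[x₁,…,xₙ]` are algebraically independent, then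
for `G = ∑ a_{ij} x^i y^j ∈ ℂ[x,y]` one has
`deg G(f,g) = max {i·deg f + j·deg g : a_{ij} ≠ 0}`. -/
theorem totalDegree_comp_eq_sup (n : ℕ) (f g : MvPolynomial (Fin n) ℂ)
    (hind : AlgebraicIndependent ℂ ![topHomPart f, topHomPart g])
    (G : MvPolynomial (Fin 2) ℂ) :
    (aeval ![f, g] G).totalDegree =
      G.support.sup (fun m => m 0 * f.totalDegree + m 1 * g.totalDegree) := by
  rcases eq_or_ne G 0 with rfl | hG
  · simp
  set w : Fin 2 → ℕ := ![f.totalDegree, g.totalDegree]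
  have hw : ∀ i, (![f, g] i).totalDegree ≤ w i := fun i => by fin_cases i <;> rfl
  have htop : (fun i => homogeneousComponent (w i) (![f, g] i)) =
      ![topHomPart f, topHomPart g] := by
    ext1 i; fin_cases i <;> rfl
  have hsup : G.support.sup (fun m => m 0 * f.totalDegree + m 1 * g.totalDegree) =
      weightedTotalDegree w G := by
    simp [weightedTotalDegree, Finsupp.weight_eq_sum, w]
  rw [hsup]
  refine le_antisymm (totalDegree_aeval_le_weightedTotalDegree hw G) (not_lt.mp fun hlt => ?_)
  have htopG := homogeneousComponent_aeval hw (le_refl (weightedTotalDegree w G))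
  rw [homogeneousComponent_eq_zero _ _ hlt, htop] at htopG
  exact weightedHomogeneousComponent_weightedTotalDegree_ne_zero hG
    (hind.eq_zero_of_aeval_eq_zero _ htopG.symm)
end
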